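/- Let σ = -1 and let q_1,…,q_n be a negative hyperbolic rotopulsator of the curved n-body problem such that the functions ρ_1,…,ρ_n are all equal to one common function ρ. Then the identity 2ρ'(t)φ'(t) + ρ(t)φ''(t) = 0 holds for all t. -/

import Mathlib

/-!
Only the third and fourth coordinates matter. In the equations of motion both correction terms
are multiples of `q_i`, so they drop out of `q_{i4} q_{i3}'' - q_{i3} q_{i4}''`, which becomes a sum
over `j ≠ i` of terms antisymmetric in `(i, j)`: weighted by the masses, these cross terms sum to
zero. For a rotopulsator with common `ρ`, `cosh² - sinh² = 1` turns each cross term into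
`ρ (2ρ'φ' + ρφ'')`, so `(∑ m_i) ρ (2ρ'φ' + ρφ'') = 0`.
-/

open Real Finset

/-- The "curved inner product" `x ⊙ y = x₁y₁ + x₂y₂ + x₃y₃ + σx₄y₄` on `ℝ⁴`. -/
noncomputable def odot (σ : ℝ) (x y : Fin 4 → ℝ) : ℝ :=
  x 0 * y 0 + x 1 * y 1 + x 2 * y 2 + σ * x 3 * y 3

lemma odot_comm (σ : ℝ) (x y : Fin 4 → ℝ) : odot σ x y = odot σ y x := by
  unfold odot; ring

lemma sum_sum_erase_eq_zero_of_antisymm {ι : Type*} [Fintype ι] [DecidableEq ι]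
    (f : ι → ι → ℝ) (hf : ∀ i j, f j i = -f i j) :
    ∑ i, ∑ j ∈ univ.erase i, f i j = 0 := by
  have hdiag : ∀ i, f i i = 0 := fun i => by linarith [hf i i]
  simp_rw [sum_erase _ (hdiag _)]
  have hneg : ∑ i, ∑ j, f i j = -∑ i, ∑ j, f i j :=
    calc ∑ i, ∑ j, f i j = ∑ i, ∑ j, f j i := sum_comm
      _ = -∑ i, ∑ j, f i j := by
        simp only [← sum_neg_distrib]
        exact sum_congr rfl fun i _ => sum_congr rfl fun j _ => hf i j
  linarith

lemma cross_eq_sum_of_central_form {ι : Type*} (s : Finset ι) (w c d X Y : ι → ℝ)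
    (μ x y ax ay : ℝ)
    (hx : ax = ∑ j ∈ s, w j * (X j - c j * x) / d j - μ * x)
    (hy : ay = ∑ j ∈ s, w j * (Y j - c j * y) / d j - μ * y) :
    y * ax - x * ay = ∑ j ∈ s, w j * (y * X j - x * Y j) / d j := by
  have hsum : ∑ j ∈ s, w j * (y * X j - x * Y j) / d j =
      y * ∑ j ∈ s, w j * (X j - c j * x) / d j - x * ∑ j ∈ s, w j * (Y j - c j * y) / d j := by
    rw [mul_sum, mul_sum, ← sum_sub_distrib]
    exact sum_congr rfl fun j _ => by ring
  rw [hx, hy, hsum]; ring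

/-- Conservation of angular momentum in the `(x_k, x_l)`-plane, in differentiated form. -/
theorem sum_mass_mul_cross_accel_eq_zero (σ : ℝ) {n : ℕ}
    (q : Fin n → ℝ → Fin 4 → ℝ) (m : Fin n → ℝ)
    (heom : ∀ i t k,
      deriv (deriv fun s => q i s k) t =
        (∑ j ∈ Finset.univ.erase i,
          m j * (q j t k - σ * odot σ (q i t) (q j t) * q i t k) /
            (σ - σ * (odot σ (q i t) (q j t)) ^ 2) ^ ((3 : ℝ) / 2))
        - σ * odot σ (fun l => deriv (fun s => q i s l) t)
            (fun l => deriv (fun s => q i s l) t) * q i t k)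
    (t : ℝ) (k l : Fin 4) :
    ∑ i, m i * (q i t l * deriv (deriv fun s => q i s k) t
      - q i t k * deriv (deriv fun s => q i s l) t) = 0 := by
  have hcross : ∀ i, m i * (q i t l * deriv (deriv fun s => q i s k) t
      - q i t k * deriv (deriv fun s => q i s l) t) =
      ∑ j ∈ univ.erase i, m i * (m j * (q i t l * q j t k - q i t k * q j t l) /
        (σ - σ * (odot σ (q i t) (q j t)) ^ 2) ^ ((3 : ℝ) / 2)) := fun i => by
    rw [cross_eq_sum_of_central_form _ _ _ _ _ _ _ _ _ _ _ (heom i t k) (heom i t l), mul_sum]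
  simp_rw [hcross]
  refine sum_sum_erase_eq_zero_of_antisymm _ fun i j => ?_
  rw [odot_comm σ (q j t)]
  ring

section HyperbolicPolar

variable {ρ θ : ℝ → ℝ}

lemma hasDerivAt_mul_sinh_comp (hρ : Differentiable ℝ ρ) (hθ : Differentiable ℝ θ) (x : ℝ) :
    HasDerivAt (fun s => ρ s * sinh (θ s))
      (deriv ρ x * sinh (θ x) + ρ x * (cosh (θ x) * deriv θ x)) x :=
  (hρ x).hasDerivAt.mul (hθ x).hasDerivAt.sinh

lemma hasDerivAt_mul_cosh_comp (hρ : Differentiable ℝ ρ) (hθ : Differentiable ℝ θ) (x : ℝ) :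
    HasDerivAt (fun s => ρ s * cosh (θ s))
      (deriv ρ x * cosh (θ x) + ρ x * (sinh (θ x) * deriv θ x)) x :=
  (hρ x).hasDerivAt.mul (hθ x).hasDerivAt.cosh

variable (hρ : Differentiable ℝ ρ) (hρ' : Differentiable ℝ (deriv ρ))
  (hθ : Differentiable ℝ θ) (hθ' : Differentiable ℝ (deriv θ))
include hρ hρ' hθ hθ'

lemma deriv_deriv_mul_sinh_comp (t : ℝ) :
    deriv (deriv fun s => ρ s * sinh (θ s)) t =
      deriv (deriv ρ) t * sinh (θ t) + 2 * deriv ρ t * cosh (θ t) * deriv θ t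
        + ρ t * sinh (θ t) * deriv θ t ^ 2 + ρ t * cosh (θ t) * deriv (deriv θ) t := by
  have h : HasDerivAt (fun x => deriv ρ x * sinh (θ x) + ρ x * (cosh (θ x) * deriv θ x)) _ t :=
    ((hρ' t).hasDerivAt.mul (hθ t).hasDerivAt.sinh).add
      ((hρ t).hasDerivAt.mul ((hθ t).hasDerivAt.cosh.mul (hθ' t).hasDerivAt))
  rw [funext fun x => (hasDerivAt_mul_sinh_comp hρ hθ x).deriv, h.deriv]
  ring

lemma deriv_deriv_mul_cosh_comp (t : ℝ) :
    deriv (deriv fun s => ρ s * cosh (θ s)) t =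
      deriv (deriv ρ) t * cosh (θ t) + 2 * deriv ρ t * sinh (θ t) * deriv θ t
        + ρ t * cosh (θ t) * deriv θ t ^ 2 + ρ t * sinh (θ t) * deriv (deriv θ) t := by
  have h : HasDerivAt (fun x => deriv ρ x * cosh (θ x) + ρ x * (sinh (θ x) * deriv θ x)) _ t :=
    ((hρ' t).hasDerivAt.mul (hθ t).hasDerivAt.cosh).add
      ((hρ t).hasDerivAt.mul ((hθ t).hasDerivAt.sinh.mul (hθ' t).hasDerivAt))
  rw [funext fun x => (hasDerivAt_mul_cosh_comp hρ hθ x).deriv, h.deriv]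
  ring

lemma cross_deriv_deriv_mul_sinh_cosh_comp (t : ℝ) :
    ρ t * cosh (θ t) * deriv (deriv fun s => ρ s * sinh (θ s)) t
      - ρ t * sinh (θ t) * deriv (deriv fun s => ρ s * cosh (θ s)) t =
      ρ t * (2 * deriv ρ t * deriv θ t + ρ t * deriv (deriv θ) t) := by
  rw [deriv_deriv_mul_sinh_comp hρ hρ' hθ hθ', deriv_deriv_mul_cosh_comp hρ hρ' hθ hθ']
  linear_combination ρ t * (2 * deriv ρ t * deriv θ t + ρ t * deriv (deriv θ) t) *
    cosh_sq_sub_sinh_sq (θ t)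

end HyperbolicPolar

theorem negative_hyperbolic_rotopulsator_common_rho_angular_identity
    (σ : ℝ) (n : ℕ) (hn : 1 ≤ n)
    (q : Fin n → ℝ → Fin 4 → ℝ) (m : Fin n → ℝ)
    (hm : ∀ i, 0 < m i)
    -- the equations of motion of the curved n-body problem
    (heom : ∀ i t k,
      deriv (deriv fun s => q i s k) t =
        (∑ j ∈ Finset.univ.erase i,
          m j * (q j t k - σ * odot σ (q i t) (q j t) * q i t k) /
            (σ - σ * (odot σ (q i t) (q j t)) ^ 2) ^ ((3 : ℝ) / 2))
        - σ * odot σ (fun l => deriv (fun s => q i s l) t)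
            (fun l => deriv (fun s => q i s l) t) * q i t k)
    -- negative hyperbolic rotopulsator structure with common `ρ`
    (ρ φ : ℝ → ℝ) (hρpos : ∀ t, 0 < ρ t)
    (hρ1 : Differentiable ℝ ρ) (hρ2 : Differentiable ℝ (deriv ρ))
    (hφ1 : Differentiable ℝ φ) (hφ2 : Differentiable ℝ (deriv φ))
    (β : Fin n → ℝ)
    (hrep : ∀ i t, q i t 2 = ρ t * Real.sinh (φ t + β i) ∧
                   q i t 3 = ρ t * Real.cosh (φ t + β i)) :
    ∀ t, 2 * deriv ρ t * deriv φ t + ρ t * deriv (deriv φ) t = 0 := by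
  intro t
  have hcross : ∀ i, q i t 3 * deriv (deriv fun s => q i s 2) t
      - q i t 2 * deriv (deriv fun s => q i s 3) t =
      ρ t * (2 * deriv ρ t * deriv φ t + ρ t * deriv (deriv φ) t) := fun i => by
    have hθ1 : Differentiable ℝ fun s => φ s + β i := hφ1.add_const _
    have hθ2 : Differentiable ℝ (deriv fun s => φ s + β i) := by
      rwa [deriv_add_const']
    simp_rw [(hrep i _).1, (hrep i _).2]
    rw [cross_deriv_deriv_mul_sinh_cosh_comp hρ1 hρ2 hθ1 hθ2, deriv_add_const']
  have htotal := sum_mass_mul_cross_accel_eq_zero σ q m heom t 2 3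
  simp_rw [hcross, ← sum_mul] at htotal
  have : Nonempty (Fin n) := Fin.pos_iff_nonempty.mp hn
  have hmass : 0 < ∑ i, m i := sum_pos (fun i _ => hm i) univ_nonempty
  simpa [hmass.ne', (hρpos t).ne'] using htotal
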